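/- Let α₀, α₁ ∈ ℂ with 2α₀ + α₁ = 1, U ⊆ ℂ open, and let (x, y, z, w, q) be differentiable functions on U solving system (11), with y(t) ≠ 0 for all t ∈ U. Then the functions (x − 9α₁ w/y + (162/4)α₁² q/y² − (243/2)α₁³ z/y³ − (729/8)α₁⁴/y⁴, y, z + 3α₁/y, w − 9α₁ q/y + (81/2)α₁² z/y² + (81/2)α₁³/y³, q − 9α₁ z/y − (27/2)α₁²/y²) solve system (11) with parameters (α₀ + α₁, −α₁) on U. (This is the Bäcklund transformation s₁ of the affine Weyl group of type A₂^(2).) -/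

import Mathlib

/-!
The transformation is checked pointwise: each new component is a polynomial in `x, z, w, q`
and `1 / y`, so its derivative follows from the quotient rule and system (11); after
eliminating `α₀ = (1 - α₁) / 2` what remains is an identity of rational functions.
-/

/-- `(x,y,z,w,q)` solves system (11) with parameters `α₀, α₁` on `U`:
`x' = -2xz - 3α₀`, `y' = yz + (3/2)α₁`, `z' = z² + q`,
`w' = -zw + (2/3)x + (1/3)y`, `q' = w`. -/
def SolvesSys11 (a0 a1 : ℂ) (U : Set ℂ) (x y z w q : ℂ → ℂ) : Prop :=
  ∀ t ∈ U,
    HasDerivAt x (-2 * x t * z t - 3 * a0) t ∧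
    HasDerivAt y (y t * z t + (3/2) * a1) t ∧
    HasDerivAt z (z t ^ 2 + q t) t ∧
    HasDerivAt w (-(z t) * w t + (2/3) * x t + (1/3) * y t) t ∧
    HasDerivAt q (w t) t

theorem HasDerivAt.div_pow {𝕜 : Type*} [NontriviallyNormedField 𝕜] {f g : 𝕜 → 𝕜}
    {f' g' x : 𝕜} (hf : HasDerivAt f f' x) (hg : HasDerivAt g g' x) (hx : g x ≠ 0) (n : ℕ) :
    HasDerivAt (fun s => f s / g s ^ n) ((f' * g x - n * f x * g') / g x ^ (n + 1)) x := by
  refine (hf.fun_div (hg.fun_pow n) (pow_ne_zero n hx)).congr_deriv ?_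
  rcases n with _ | n
  · simp [hx]
  · field_simp
    rw [Nat.add_sub_cancel]
    ring

def SolvesSys11At (a0 a1 : ℂ) (x y z w q : ℂ → ℂ) (t : ℂ) : Prop :=
  HasDerivAt x (-2 * x t * z t - 3 * a0) t ∧
    HasDerivAt y (y t * z t + (3/2) * a1) t ∧
    HasDerivAt z (z t ^ 2 + q t) t ∧
    HasDerivAt w (-(z t) * w t + (2/3) * x t + (1/3) * y t) t ∧
    HasDerivAt q (w t) t

theorem SolvesSys11At.backlund_s1 {a0 a1 : ℂ} {x y z w q : ℂ → ℂ} {t : ℂ}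
    (h : SolvesSys11At a0 a1 x y z w q t) (hrel : 2 * a0 + a1 = 1) (hyt : y t ≠ 0) :
    SolvesSys11At (a0 + a1) (-a1)
      (fun t => x t - 9 * a1 * w t / y t + (162/4) * a1 ^ 2 * q t / y t ^ 2
        - (243/2) * a1 ^ 3 * z t / y t ^ 3 - (729/8) * a1 ^ 4 / y t ^ 4)
      y
      (fun t => z t + 3 * a1 / y t)
      (fun t => w t - 9 * a1 * q t / y t + (81/2) * a1 ^ 2 * z t / y t ^ 2
        + (81/2) * a1 ^ 3 / y t ^ 3)
      (fun t => q t - 9 * a1 * z t / y t - (27/2) * a1 ^ 2 / y t ^ 2) t := by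
  obtain rfl : a0 = (1 - a1) / 2 := by linear_combination hrel / 2
  obtain ⟨hx, hy, hz, hw, hq⟩ := h
  refine ⟨?_, hy.congr_deriv (by field_simp; ring), ?_, ?_, ?_⟩
  · refine ((((hx.fun_sub ((hw.const_mul (9 * a1)).fun_div hy hyt)).fun_add
      ((hq.const_mul ((162/4) * a1 ^ 2)).div_pow hy hyt 2)).fun_sub
      ((hz.const_mul ((243/2) * a1 ^ 3)).div_pow hy hyt 3)).fun_sub
      ((hasDerivAt_const t ((729/8) * a1 ^ 4)).div_pow hy hyt 4)).congr_deriv ?_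
    field_simp
    ring
  · refine (hz.fun_add ((hasDerivAt_const t (3 * a1)).fun_div hy hyt)).congr_deriv ?_
    field_simp
    ring
  · refine (((hw.fun_sub ((hq.const_mul (9 * a1)).fun_div hy hyt)).fun_add
      ((hz.const_mul ((81/2) * a1 ^ 2)).div_pow hy hyt 2)).fun_add
      ((hasDerivAt_const t ((81/2) * a1 ^ 3)).div_pow hy hyt 3)).congr_deriv ?_
    field_simp
    ring
  · refine ((hq.fun_sub ((hz.const_mul (9 * a1)).fun_div hy hyt)).fun_sub
      ((hasDerivAt_const t ((27/2) * a1 ^ 2)).div_pow hy hyt 2)).congr_deriv ?_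
    field_simp
    ring

theorem stmt6_general (a0 a1 : ℂ) (hrel : 2 * a0 + a1 = 1) (U : Set ℂ)
    (x y z w q : ℂ → ℂ) (h : SolvesSys11 a0 a1 U x y z w q)
    (hy : ∀ t ∈ U, y t ≠ 0) :
    SolvesSys11 (a0 + a1) (-a1) U
      (fun t => x t - 9 * a1 * w t / y t + (162/4) * a1 ^ 2 * q t / y t ^ 2
        - (243/2) * a1 ^ 3 * z t / y t ^ 3 - (729/8) * a1 ^ 4 / y t ^ 4)
      y
      (fun t => z t + 3 * a1 / y t)
      (fun t => w t - 9 * a1 * q t / y t + (81/2) * a1 ^ 2 * z t / y t ^ 2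
        + (81/2) * a1 ^ 3 / y t ^ 3)
      (fun t => q t - 9 * a1 * z t / y t - (27/2) * a1 ^ 2 / y t ^ 2) :=
  fun t ht => SolvesSys11At.backlund_s1 (h t ht) hrel (hy t ht)

/-- The Bäcklund transformation `s₁` of the affine Weyl group of
type `A₂⁽²⁾`: if `(x,y,z,w,q)` solves system (11) with parameters `(α₀,α₁)`,
`2α₀ + α₁ = 1`, and `y ≠ 0` on `U`, then the transformed tuple solves system (11)
with parameters `(α₀ + α₁, -α₁)`. -/
theorem stmt6 (a0 a1 : ℂ) (hrel : 2 * a0 + a1 = 1) (U : Set ℂ) (hU : IsOpen U)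
    (x y z w q : ℂ → ℂ) (h : SolvesSys11 a0 a1 U x y z w q)
    (hy : ∀ t ∈ U, y t ≠ 0) :
    SolvesSys11 (a0 + a1) (-a1) U
      (fun t => x t - 9 * a1 * w t / y t + (162/4) * a1 ^ 2 * q t / y t ^ 2
        - (243/2) * a1 ^ 3 * z t / y t ^ 3 - (729/8) * a1 ^ 4 / y t ^ 4)
      y
      (fun t => z t + 3 * a1 / y t)
      (fun t => w t - 9 * a1 * q t / y t + (81/2) * a1 ^ 2 * z t / y t ^ 2
        + (81/2) * a1 ^ 3 / y t ^ 3)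
      (fun t => q t - 9 * a1 * z t / y t - (27/2) * a1 ^ 2 / y t ^ 2) :=
  stmt6_general a0 a1 hrel U x y z w q h hy
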